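/- Given minimum weighted colorings of H and of the contracted graph F = f(G,H,h) (where h has weight χ_w(H)), merging the stable sets containing h in F with the stable sets of the coloring of H (replacing h by a stable set of H, splitting multiplicities by taking the minimum at each step) yields a weighted coloring of G of cost equal to χ_w(F), hence a minimum weighted coloring of G. -/

import Mathlib

/-!
Contracting the module `H` to `h` sends a stable set `S` of `G` to a stable set of `F`, which
contains `h` exactly when `S` meets `H`; the module property is what keeps it stable. Applied to a
coloring of `G` this gives a coloring of `F` of the same cost (the traces on `H` of the sets meeting
`H` color `H`, so `h` is covered `χ_w(H)` times), hence `χ_w(F) ≤ χ_w(G)`.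

Conversely, in a coloring of `F` the sets containing `h` are used at least `χ_w(H)` times, so each
of them can absorb one set of a minimum coloring of `H`, or `∅` once those run out. A set of `F`
containing `h` has no neighbour of `H`, so every merged set is stable in `G`, and the result is a
coloring of `G` of the same cost as that of `F`.

Colorings are handled as lists of stable sets with repetitions, so that this pairing is a `zip`.
-/

variable {V : Type*} [Fintype V] [DecidableEq V]

/-- A stable (independent) set. -/
def IsStable (G : SimpleGraph V) (s : Set V) : Prop :=
  ∀ a ∈ s, ∀ b ∈ s, ¬ G.Adj a b

/-- A weighted coloring, given as a multiplicity function on finsets of vertices. -/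
def IsWC (G : SimpleGraph V) (w : V → ℕ) (c : Finset V → ℕ) : Prop :=
  (∀ S : Finset V, c S ≠ 0 → IsStable G (S : Set V)) ∧
  ∀ v : V, w v ≤ ∑ S : Finset V, (if v ∈ S then c S else 0)

/-- The cost of a weighted coloring. -/
def WCcost (c : Finset V → ℕ) : ℕ := ∑ S : Finset V, c S

/-- The weighted chromatic number. -/
noncomputable def chiW (G : SimpleGraph V) (w : V → ℕ) : ℕ :=
  sInf { n : ℕ | ∃ c : Finset V → ℕ, IsWC G w c ∧ n = WCcost c }

/-- A module of a graph. -/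
def IsModule (G : SimpleGraph V) (H : Finset V) : Prop :=
  ∀ v ∉ H, (∀ u ∈ H, G.Adj v u) ∨ (∀ u ∈ H, ¬ G.Adj v u)

def NontrivialModule (G : SimpleGraph V) (H : Finset V) : Prop :=
  IsModule G H ∧ 1 < H.card ∧ H.card < Fintype.card V

/-- The quotient graph f(G,H,h): `none` plays the role of the contracted vertex h. -/
def quotientGraph (G : SimpleGraph V) (H : Finset V) :
    SimpleGraph (Option {v : V // v ∉ H}) where
  Adj x y :=
    match x, y with
    | some a, some b => G.Adj a.1 b.1
    | some a, none => ∃ u ∈ H, G.Adj a.1 u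
    | none, some b => ∃ u ∈ H, G.Adj b.1 u
    | none, none => False
  symm := ⟨by
    rintro (a | a) (b | b) hab
    · exact hab
    · exact hab
    · exact hab
    · exact hab.symm⟩
  loopless := ⟨by
    rintro (a | a) hab
    · exact hab
    · exact G.loopless.irrefl _ hab⟩

/-- Weights on the quotient graph: h gets the weighted chromatic number of G[H]. -/
noncomputable def quotientWeights (G : SimpleGraph V) (w : V → ℕ) (H : Finset V) :
    Option {v : V // v ∉ H} → ℕ :=
  fun x => match x with
  | none => chiW (G.induce (H : Set V)) (fun v => w v.1)
  | some a => w a.1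

def Prime' (G : SimpleGraph V) : Prop :=
  ∀ H : Finset V, IsModule G H → H.card ≤ 1 ∨ H = Finset.univ

def IsBuoy (G : SimpleGraph V) (S : Fin 5 → Finset V) : Prop :=
  (∀ i, (S i).Nonempty) ∧
  (∀ v : V, ∃! i, v ∈ S i) ∧
  (∀ i, ∀ a ∈ S i, ∀ b ∈ S (i + 1), G.Adj a b) ∧
  (∀ i, ∀ a ∈ S i, ∀ b ∈ S (i + 2), ¬ G.Adj a b)

namespace List

variable {α β γ : Type*}

theorem sum_count_eq_length [Fintype α] [DecidableEq α] (L : List α) :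
    ∑ a, L.count a = L.length := by
  simpa using Multiset.sum_count_eq_card (s := Finset.univ) (m := (L : Multiset α))
    (fun a _ => Finset.mem_univ a)

theorem sum_ite_count_eq_countP [Fintype α] [DecidableEq α] (L : List α) (p : α → Prop)
    [DecidablePred p] : ∑ a, (if p a then L.count a else 0) = L.countP (p ·) := by
  calc ∑ a, (if p a then L.count a else 0) = ∑ a, (L.filter (p ·)).count a := by
        refine Finset.sum_congr rfl fun a _ => ?_
        split_ifs with ha
        · exact (count_filter (by simpa using ha)).symm
        · exact (count_eq_zero.2 fun h => ha (by simpa using (mem_filter.1 h).2)).symm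
    _ = L.countP (p ·) := by rw [sum_count_eq_length, countP_eq_length_filter]

theorem exists_count_eq [Fintype α] [DecidableEq α] (c : α → ℕ) :
    ∃ L : List α, ∀ a, L.count a = c a :=
  ⟨Finset.univ.toList.flatMap fun a => replicate (c a) a, fun a => by
    simp [count_flatMap, count_replicate, Function.comp_def, Finset.sum_map_toList]⟩

theorem countP_map_zip_of_fst {l₁ : List α} {l₂ : List β} {f : α × β → γ} {p : γ → Bool}
    {q : α → Bool} (hf : ∀ a b, p (f (a, b)) = q a) (h : l₁.length ≤ l₂.length) :
    ((l₁.zip l₂).map f).countP p = l₁.countP q := by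
  calc ((l₁.zip l₂).map f).countP p = ((l₁.zip l₂).map Prod.fst).countP q := by
        simp only [countP_map, Function.comp_def, hf]
    _ = l₁.countP q := by rw [map_fst_zip h]

theorem countP_map_zip_of_snd {l₁ : List α} {l₂ : List β} {f : α × β → γ} {p : γ → Bool}
    {q : β → Bool} (hf : ∀ a b, p (f (a, b)) = q b) (h : l₂.length ≤ l₁.length) :
    ((l₁.zip l₂).map f).countP p = l₂.countP q := by
  calc ((l₁.zip l₂).map f).countP p = ((l₁.zip l₂).map Prod.snd).countP q := by
        simp only [countP_map, Function.comp_def, hf]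
    _ = l₂.countP q := by rw [map_snd_zip h]

end List

open List

section

variable {W : Type*} [DecidableEq W]

/-- A weighted coloring listed set by set, each stable set repeated as often as it is used. -/
def IsWCList (G : SimpleGraph W) (w : W → ℕ) (L : List (Finset W)) : Prop :=
  (∀ S ∈ L, IsStable G (S : Set W)) ∧ ∀ v, w v ≤ L.countP (v ∈ ·)

variable {G : SimpleGraph W} {w : W → ℕ} {H : Finset W} {L : List (Finset W)}

theorem isWC_count_iff [Fintype W] : IsWC G w (L.count ·) ↔ IsWCList G w L := by
  simp only [IsWC, IsWCList, sum_ite_count_eq_countP, ne_eq, count_eq_zero, not_not]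

theorem wcCost_count [Fintype W] (L : List (Finset W)) : WCcost (L.count ·) = L.length :=
  sum_count_eq_length L

theorem IsWC.exists_isWCList [Fintype W] {c : Finset W → ℕ} (hc : IsWC G w c) :
    ∃ L, IsWCList G w L ∧ WCcost c = L.length := by
  obtain ⟨L, hL⟩ := exists_count_eq c
  obtain rfl : (L.count ·) = c := funext hL
  exact ⟨L, isWC_count_iff.1 hc, wcCost_count L⟩

theorem chiW_le_length [Fintype W] (hL : IsWCList G w L) : chiW G w ≤ L.length :=
  Nat.sInf_le ⟨_, isWC_count_iff.2 hL, (wcCost_count L).symm⟩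

theorem exists_isWCList [Fintype W] (G : SimpleGraph W) (w : W → ℕ) : ∃ L, IsWCList G w L := by
  refine ⟨Finset.univ.toList.flatMap fun v => replicate (w v) {v}, ?_, fun v => ?_⟩
  · simp only [mem_flatMap, mem_replicate]
    rintro _ ⟨v, -, -, rfl⟩ a ha b hb
    simp_all
  · simp [countP_flatMap, Function.comp_def, countP_replicate, Finset.sum_map_toList]

theorem le_chiW [Fintype W] {n : ℕ} (h : ∀ L, IsWCList G w L → n ≤ L.length) : n ≤ chiW G w := by
  obtain ⟨L, hL⟩ := exists_isWCList G w
  refine le_csInf ⟨_, _, isWC_count_iff.2 hL, rfl⟩ ?_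
  rintro _ ⟨c, hc, rfl⟩
  obtain ⟨L', hL', hcost⟩ := hc.exists_isWCList
  exact hcost ▸ h L' hL'

theorem IsWCList.filter_nonempty (hL : IsWCList G w L) :
    IsWCList G w (L.filter (·.Nonempty)) := by
  refine ⟨fun S hS => hL.1 S (mem_filter.1 hS).1, fun v => (hL.2 v).trans_eq ?_⟩
  rw [countP_filter]
  exact countP_congr fun S _ => by simpa using fun hv => ⟨v, hv⟩

theorem IsWCList.map_subtype (hL : IsWCList G w L) (H : Finset W) :
    IsWCList (G.induce (H : Set W)) (fun v => w v.1) (L.map (·.subtype (· ∈ (H : Set W)))) := by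
  refine ⟨?_, fun x => (hL.2 x.1).trans_eq ?_⟩
  · simp only [mem_map]
    rintro _ ⟨S, hS, rfl⟩ x hx y hy
    exact hL.1 S hS x.1 (by simpa using hx) y.1 (by simpa using hy)
  · simp [countP_map, Function.comp_def]

/-- `(Y - {h}) ∪ X`, as a set of vertices of `G`. -/
def mergeSet (H : Finset W) (Y : Finset (Option {v : W // v ∉ H}))
    (X : Finset {v : W // v ∈ (H : Set W)}) : Finset W :=
  X.map (Function.Embedding.subtype _) ∪ Y.eraseNone.map (Function.Embedding.subtype _)

@[simp]
theorem inside_mem_mergeSet_iff {Y : Finset (Option {v : W // v ∉ H})}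
    {X : Finset {v : W // v ∈ (H : Set W)}} (x : {v : W // v ∈ (H : Set W)}) :
    x.1 ∈ mergeSet H Y X ↔ x ∈ X := by
  simp only [mergeSet, Finset.mem_union, Finset.mem_map, Function.Embedding.coe_subtype,
    Subtype.val_inj, exists_eq_right, Finset.mem_eraseNone, or_iff_left_iff_imp]
  rintro ⟨y, -, hyx⟩
  exact absurd (hyx ▸ x.2) y.2

@[simp]
theorem outside_mem_mergeSet_iff {Y : Finset (Option {v : W // v ∉ H})}
    {X : Finset {v : W // v ∈ (H : Set W)}} (y : {v : W // v ∉ H}) :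
    y.1 ∈ mergeSet H Y X ↔ some y ∈ Y := by
  simp only [mergeSet, Finset.mem_union, Finset.mem_map, Function.Embedding.coe_subtype,
    Subtype.val_inj, exists_eq_right, Finset.mem_eraseNone, or_iff_right_iff_imp]
  rintro ⟨x, -, hxy⟩
  exact absurd (hxy ▸ x.2) y.2

theorem isStable_mergeSet {Y : Finset (Option {v : W // v ∉ H})}
    {X : Finset {v : W // v ∈ (H : Set W)}} (hY : IsStable (quotientGraph G H) (Y : Set _))
    (hX : IsStable (G.induce (H : Set W)) (X : Set _)) (hYX : none ∈ Y ∨ X = ∅) :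
    IsStable G (mergeSet H Y X : Set W) := by
  have hh : ∀ x ∈ X, none ∈ Y := fun x hx => hYX.resolve_right (Finset.ne_empty_of_mem hx)
  simp only [IsStable, mergeSet, Finset.coe_union, Finset.coe_map, Set.mem_union,
    Set.mem_image, Finset.mem_coe, Finset.mem_eraseNone, Function.Embedding.coe_subtype]
  rintro _ (⟨x, hx, rfl⟩ | ⟨y, hy, rfl⟩) _ (⟨x', hx', rfl⟩ | ⟨y', hy', rfl⟩) hadj
  · exact hX x hx x' hx' hadj
  · exact hY _ hy' _ (hh x hx) ⟨x, x.2, hadj.symm⟩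
  · exact hY _ hy _ (hh x' hx') ⟨x', x'.2, hadj⟩
  · exact hY _ hy _ hy' hadj

/-- Each set of `LF` containing `h` takes in turn a set of `LH`, or `∅` once `LH` is exhausted. -/
def mergeList (H : Finset W) (LF : List (Finset (Option {v : W // v ∉ H})))
    (LH : List (Finset {v : W // v ∈ (H : Set W)})) : List (Finset W) :=
  let A := LF.filter (none ∈ ·)
  (A.zip (LH.rightpad A.length ∅)).map (fun p => mergeSet H p.1 p.2) ++
    (LF.filter (none ∉ ·)).map (mergeSet H · ∅)

variable {LF : List (Finset (Option {v : W // v ∉ H}))}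
  {LH : List (Finset {v : W // v ∈ (H : Set W)})}

theorem length_mergeList : (mergeList H LF LH).length = LF.length := by
  simp only [mergeList, length_append, length_map, length_zip, length_rightpad]
  rw [length_eq_length_filter_add (l := LF) (none ∈ ·)]
  simp only [decide_not]
  omega

theorem isStable_of_mem_mergeList (hLF : ∀ Y ∈ LF, IsStable (quotientGraph G H) (Y : Set _))
    (hLH : ∀ X ∈ LH, IsStable (G.induce (H : Set W)) (X : Set _)) :
    ∀ S ∈ mergeList H LF LH, IsStable G (S : Set W) := by
  have hempty : IsStable (G.induce (H : Set W)) ((∅ : Finset {v : W // v ∈ (H : Set W)}) : Set _) :=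
    by simp [IsStable]
  intro S hS
  rcases mem_append.1 hS with hS | hS
  · obtain ⟨⟨Y, X⟩, hYX, rfl⟩ := mem_map.1 hS
    obtain ⟨hY, hX⟩ := of_mem_zip hYX
    refine isStable_mergeSet (hLF Y (mem_filter.1 hY).1) ?_
      (.inl (by simpa using (mem_filter.1 hY).2))
    rcases mem_append.1 hX with hX | hX
    · exact hLH X hX
    · exact eq_of_mem_replicate hX ▸ hempty
  · obtain ⟨Y, hY, rfl⟩ := mem_map.1 hS
    exact isStable_mergeSet (hLF Y (mem_filter.1 hY).1) hempty (.inr rfl)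

theorem countP_inside_mem_mergeList (h : LH.length ≤ LF.countP (none ∈ ·))
    (x : {v : W // v ∈ (H : Set W)}) :
    (mergeList H LF LH).countP (x.1 ∈ ·) = LH.countP (x ∈ ·) := by
  rw [countP_eq_length_filter] at h
  rw [mergeList, countP_append, countP_map_zip_of_snd (q := (x ∈ ·)) (fun Y X => by simp)
    (by rw [length_rightpad]; omega)]
  simp [rightpad, countP_map, Function.comp_def]

theorem countP_outside_mem_mergeList (y : {v : W // v ∉ H}) :
    (mergeList H LF LH).countP (y.1 ∈ ·) = LF.countP (some y ∈ ·) := by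
  rw [mergeList, countP_append, countP_map_zip_of_fst (q := (some y ∈ ·)) (fun Y X => by simp)
    (by rw [length_rightpad]; omega), countP_eq_countP_filter_add LF _ (none ∈ ·)]
  simp [countP_map, Function.comp_def, decide_not]

theorem isWCList_mergeList {wF : Option {v : W // v ∉ H} → ℕ}
    (hLF : IsWCList (quotientGraph G H) wF LF) (hw : ∀ y, wF (some y) = w y.1)
    (hLH : IsWCList (G.induce (H : Set W)) (fun x => w x.1) LH)
    (h : LH.length ≤ LF.countP (none ∈ ·)) :
    IsWCList G w (mergeList H LF LH) := by
  refine ⟨isStable_of_mem_mergeList hLF.1 hLH.1, fun v => ?_⟩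
  by_cases hv : v ∈ H
  · obtain ⟨x, rfl⟩ : ∃ x : {v : W // v ∈ (H : Set W)}, x.1 = v := ⟨⟨v, hv⟩, rfl⟩
    exact (countP_inside_mem_mergeList h x).symm ▸ hLH.2 x
  · obtain ⟨y, rfl⟩ : ∃ y : {v : W // v ∉ H}, y.1 = v := ⟨⟨v, hv⟩, rfl⟩
    exact (countP_outside_mem_mergeList y).symm ▸ hw y ▸ hLF.2 (some y)

def quotientSet (H S : Finset W) : Finset (Option {v : W // v ∉ H}) :=
  (if (S.subtype (· ∈ (H : Set W))).Nonempty then {none} else ∅) ∪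
    (S.subtype (· ∉ H)).map Function.Embedding.some

@[simp]
theorem none_mem_quotientSet {S : Finset W} :
    none ∈ quotientSet H S ↔ (S.subtype (· ∈ (H : Set W))).Nonempty := by
  by_cases h : (S.subtype (· ∈ (H : Set W))).Nonempty <;> simp [quotientSet, h]

@[simp]
theorem some_mem_quotientSet {S : Finset W} (y : {v : W // v ∉ H}) :
    some y ∈ quotientSet H S ↔ y.1 ∈ S := by
  by_cases h : (S.subtype (· ∈ (H : Set W))).Nonempty <;> simp [quotientSet, h]

theorem isStable_quotientSet (hmod : IsModule G H) {S : Finset W} (hS : IsStable G (S : Set W)) :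
    IsStable (quotientGraph G H) (quotientSet H S : Set _) := by
  have hh : ∀ y : {v : W // v ∉ H}, y.1 ∈ S → none ∈ quotientSet H S →
      ¬ (quotientGraph G H).Adj (some y) none := by
    rintro y hy hn ⟨u, hu, hyu⟩
    obtain ⟨x, hx⟩ := none_mem_quotientSet.1 hn
    rcases hmod y.1 y.2 with hall | hnone
    · exact hS _ hy _ (Finset.mem_subtype.1 hx) (hall x.1 x.2)
    · exact hnone u hu hyu
  rintro (_ | y) h₁ (_ | y') h₂ hadj
  · exact hadj
  · exact hh y' (by simpa using h₂) h₁ hadj.symm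
  · exact hh y (by simpa using h₁) h₂ hadj
  · exact hS _ (by simpa using h₁) _ (by simpa using h₂) hadj

theorem IsWCList.map_quotientSet [Fintype W] (hmod : IsModule G H) (hL : IsWCList G w L) :
    IsWCList (quotientGraph G H) (quotientWeights G w H) (L.map (quotientSet H)) := by
  refine ⟨by simpa using fun S hS => isStable_quotientSet hmod (hL.1 S hS), ?_⟩
  rintro (_ | y)
  · calc quotientWeights G w H none = chiW (G.induce (H : Set W)) (fun v => w v.1) := rfl
      _ ≤ _ := chiW_le_length ((hL.map_subtype H).filter_nonempty)
      _ = _ := by simp [countP_eq_length_filter, filter_map, Function.comp_def]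
  · simpa [quotientWeights, countP_map, Function.comp_def] using hL.2 y.1

theorem chiW_quotientGraph_le [Fintype W] (hmod : IsModule G H) :
    chiW (quotientGraph G H) (quotientWeights G w H) ≤ chiW G w :=
  le_chiW fun _ hL => (chiW_le_length (hL.map_quotientSet hmod)).trans_eq (length_map _)

end

/-- merging minimum weighted colorings of H and of the quotient F = f(G,H,h)
yields a weighted coloring of G whose cost equals χ_w(F); it is a minimum weighted
coloring of G. -/
theorem merge_min_colorings (G : SimpleGraph V) (w : V → ℕ) (H : Finset V)
    (hH : NontrivialModule G H)
    (cH : Finset {v : V // v ∈ (H : Set V)} → ℕ)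
    (hcH : IsWC (G.induce (H : Set V)) (fun v => w v.1) cH)
    (hcHmin : WCcost cH = chiW (G.induce (H : Set V)) (fun v => w v.1))
    (cF : Finset (Option {v : V // v ∉ H}) → ℕ)
    (hcF : IsWC (quotientGraph G H) (quotientWeights G w H) cF)
    (hcFmin : WCcost cF = chiW (quotientGraph G H) (quotientWeights G w H)) :
    ∃ cG : Finset V → ℕ, IsWC G w cG ∧ WCcost cG = WCcost cF ∧ WCcost cG = chiW G w := by
  obtain ⟨LH, hLH, hcostH⟩ := hcH.exists_isWCList
  obtain ⟨LF, hLF, hcostF⟩ := hcF.exists_isWCList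
  have hlen : LH.length ≤ LF.countP (none ∈ ·) := hcostH ▸ hcHmin ▸ hLF.2 none
  have hLG := isWCList_mergeList hLF (fun _ => rfl) hLH hlen
  have hcost : WCcost ((mergeList H LF LH).count ·) = WCcost cF := by
    rw [wcCost_count, length_mergeList, hcostF]
  refine ⟨_, isWC_count_iff.2 hLG, hcost, le_antisymm ?_ ?_⟩
  · exact hcost ▸ hcFmin ▸ chiW_quotientGraph_le hH.1
  · exact (chiW_le_length hLG).trans_eq (wcCost_count _).symm
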